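/- If a clause C is cost-SR with respect to a MaxSAT instance Γ encoded with blocking variables, then C is redundant with respect to Γ, i.e., cost(Γ) = cost(Γ ∪ {C}). -/

import Mathlib

namespace PaperMaxSAT

/-- Variables are natural numbers. -/
abbrev Var := ℕ

/-- A literal is a variable together with a polarity. -/
abbrev Lit := Var × Bool

/-- Negation of a literal. -/
def negLit (l : Lit) : Lit := (l.1, !l.2)

/-- A clause is a finite set of literals. -/
abbrev Clause := Finset Lit

/-- A CNF formula is a finite multiset of clauses. -/
abbrev CNF := Multiset Clause

/-- A tautological clause contains a literal together with its negation. -/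
def isTaut (C : Clause) : Prop := ∃ l ∈ C, negLit l ∈ C

/-- The value of a substitution at a variable: a Boolean constant or a literal. -/
abbrev SubVal := Bool ⊕ Lit

/-- Negation on substitution values. -/
def negSV : SubVal → SubVal
  | .inl b => .inl !b
  | .inr l => .inr (negLit l)

/-- A substitution maps each variable to `0`, `1` or a literal. -/
abbrev Sub := Var → SubVal

/-- Applying a substitution to a literal, respecting `σ(¬x) = ¬σ(x)`. -/
def appLit (σ : Sub) (l : Lit) : SubVal :=
  if l.2 then σ l.1 else negSV (σ l.1)

/-- The identity substitution. -/
def idSub : Sub := fun v => .inr (v, true)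

/-- `σ(C) = 1` : some literal of `C` is mapped to true by `σ`. -/
def clauseTrue (σ : Sub) (C : Clause) : Prop := ∃ l ∈ C, appLit σ l = Sum.inl true

instance (σ : Sub) (C : Clause) : Decidable (clauseTrue σ C) := by
  unfold clauseTrue; infer_instance

/-- `C↾σ` : the clause whose literals are the images under `σ` of the literals
of `C` mapped to literals (literals mapped to `0` are dropped). -/
def restrictClause (σ : Sub) (C : Clause) : Clause :=
  C.biUnion (fun l => match appLit σ l with
    | .inr m => {m}
    | _ => (∅ : Clause))

/-- `Γ↾σ` : restrict every clause of `Γ`; clauses mapped to `1` are removed. -/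
def restrictCNF (σ : Sub) (Γ : CNF) : CNF :=
  (Γ.filter (fun C => ¬ clauseTrue σ C)).map (restrictClause σ)

/-- `σ ⊨ C` : `σ(C) = 1` or `σ(C)` is tautological. -/
def subSat (σ : Sub) (C : Clause) : Prop :=
  clauseTrue σ C ∨ isTaut (restrictClause σ C)

/-- The assignment `¬C`, setting all literals of `C` to false. -/
def negSub (C : Clause) : Sub := fun v =>
  if (v, true) ∈ C then .inl false
  else if (v, false) ∈ C then .inl true
  else .inr (v, true)

/-- The substitution setting the literal `l` to true and touching nothing else. -/
def litSub (l : Lit) : Sub := fun v => if v = l.1 then .inl l.2 else .inr (v, true)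

/-- Unit propagation derives the empty clause. -/
inductive UPFalse : CNF → Prop
  | empty {Γ : CNF} : (∅ : Clause) ∈ Γ → UPFalse Γ
  | step {Γ : CNF} (l : Lit) : ({l} : Clause) ∈ Γ →
      UPFalse (restrictCNF (litSub l) Γ) → UPFalse Γ

/-- The unit clauses `¬l` for `l ∈ C`. -/
def negUnits (C : Clause) : CNF := C.val.map (fun l => ({negLit l} : Clause))

/-- `Γ ⊢₁ C` : unit propagation on `Γ↾¬C` produces the empty clause. -/
def UPimplies (Γ : CNF) (C : Clause) : Prop := UPFalse (Γ + negUnits C)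

/-- `Γ ⊢₁ Δ` : `Γ ⊢₁ D` for every `D ∈ Δ`. -/
def UPimpliesAll (Γ Δ : CNF) : Prop := ∀ D ∈ Δ, UPimplies Γ D

/-- Total assignments. -/
abbrev TAssign := Var → Bool

/-- A total assignment satisfies a clause. -/
def satC (α : TAssign) (C : Clause) : Prop := ∃ l ∈ C, α l.1 = l.2

instance (α : TAssign) (C : Clause) : Decidable (satC α C) := by
  unfold satC; infer_instance

/-- A total assignment satisfies a CNF. -/
def satCNF (α : TAssign) (Γ : CNF) : Prop := ∀ C ∈ Γ, satC α C

/-- `τ ∘ σ` : composition of a total assignment with a substitution. -/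
def comp (τ : TAssign) (σ : Sub) : TAssign := fun v =>
  match σ v with
  | .inl b => b
  | .inr l => if l.2 then τ l.1 else !(τ l.1)

/-- `τ` extends the assignment `¬C`. -/
def extendsNeg (τ : TAssign) (C : Clause) : Prop := ∀ l ∈ C, τ l.1 = !l.2

/-- The cost of a total assignment w.r.t. a set `B` of blocking variables:
the number of blocking variables set to true. -/
def cost (B : Finset Var) (α : TAssign) : ℕ := (B.filter (fun b => α b = true)).card

/-- The cost of a MaxSAT instance encoded with blocking variables `B`:
the minimum cost of a satisfying total assignment. -/
noncomputable def costCNF (B : Finset Var) (Γ : CNF) : ℕ :=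
  sInf {k | ∃ α : TAssign, satCNF α Γ ∧ cost B α = k}

/-- `σ` witnesses that `C` is cost-SR w.r.t. `Γ` (with blocking variables `B`):
the redundancy condition `Γ↾¬C ⊢₁ (Γ ∪ {C})↾σ` and the cost condition. -/
def CostSRwit (B : Finset Var) (Γ : CNF) (C : Clause) (σ : Sub) : Prop :=
  UPimpliesAll (restrictCNF (negSub C) Γ) (restrictCNF σ (C ::ₘ Γ)) ∧
  ∀ τ : TAssign, extendsNeg τ C → cost B (comp τ σ) ≤ cost B τ

/-- `C` is cost-SR w.r.t. `Γ`. -/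
def CostSR (B : Finset Var) (Γ : CNF) (C : Clause) : Prop := ∃ σ, CostSRwit B Γ C σ

/-- A substitution which is an assignment: every value is `0`, `1`,
or the variable itself. -/
def isAssign (σ : Sub) : Prop :=
  ∀ v, σ v = .inl true ∨ σ v = .inl false ∨ σ v = .inr (v, true)

/-- The variables of a clause. -/
def varsClause (C : Clause) : Finset Var := C.image Prod.fst

/-- The variables of a CNF. -/
def varsCNF (Γ : CNF) : Finset Var := (Γ.map varsClause).sup

/-- Membership in the domain of an assignment. -/
def subDom (σ : Sub) (v : Var) : Prop := ∃ b : Bool, σ v = .inl b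

/-- `C` is cost-PR w.r.t. `Γ`: cost-SR witnessed by an assignment. -/
def CostPR (B : Finset Var) (Γ : CNF) (C : Clause) : Prop :=
  ∃ σ, CostSRwit B Γ C σ ∧ isAssign σ

/-- `C` is cost-SPR w.r.t. `Γ`: cost-SR witnessed by an assignment with
domain `dom(¬C) = Var(C)`. -/
def CostSPR (B : Finset Var) (Γ : CNF) (C : Clause) : Prop :=
  ∃ σ, CostSRwit B Γ C σ ∧ isAssign σ ∧ (∀ v, subDom σ v ↔ v ∈ varsClause C)

/-- `C` is cost-LPR w.r.t. `Γ`: cost-SR witnessed by an assignment with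
domain `dom(¬C)` differing from `¬C` on exactly one variable. -/
def CostLPR (B : Finset Var) (Γ : CNF) (C : Clause) : Prop :=
  ∃ σ, CostSRwit B Γ C σ ∧ isAssign σ ∧ (∀ v, subDom σ v ↔ v ∈ varsClause C) ∧
    ((varsClause C).filter (fun v => σ v ≠ negSub C v)).card = 1

/-- `D` is a resolvent of `E₁` and `E₂`. -/
def resolvent (D E₁ E₂ : Clause) : Prop :=
  ∃ x : Var, (x, true) ∈ E₁ ∧ (x, false) ∈ E₂ ∧
    D = E₁.erase (x, true) ∪ E₂.erase (x, false)

/-- A derivation from `Γ` in the calculus with redundancy rule `Red`: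
every clause of the list is in `Γ`, a weakening of an earlier clause,
a resolvent of two earlier clauses, or redundant (w.r.t. `Red`) relative to
`Γ` together with the earlier clauses, using no new variables. -/
def IsDeriv (Red : Finset Var → CNF → Clause → Prop) (B : Finset Var) (Γ : CNF)
    (L : List Clause) : Prop :=
  ∀ i, ∀ hi : i < L.length,
    L[i] ∈ Γ ∨
    (∃ j, ∃ hj : j < i, L[j]'(hj.trans hi) ⊆ L[i]) ∨
    (∃ j k, ∃ hj : j < i, ∃ hk : k < i,
      resolvent L[i] (L[j]'(hj.trans hi)) (L[k]'(hk.trans hi))) ∨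
    (Red B (Γ + (↑(L.take i) : CNF)) L[i] ∧ varsClause L[i] ⊆ varsCNF Γ)

/-- `C ∨ ℓ` is a cost blocked clause (cost-BC) w.r.t. `Γ` and `ℓ`. -/
def CostBC (B : Finset Var) (Γ : CNF) (C : Clause) (l : Lit) : Prop :=
  (∀ D ∈ Γ, negLit l ∈ D → isTaut (C ∪ D.erase (negLit l))) ∧
  ¬(l.2 = true ∧ l.1 ∈ B)

/-- Hamming distance between two total assignments, over the variables in `V`. -/
def HD (V : Finset Var) (α β : TAssign) : ℕ := (V.filter (fun v => α v ≠ β v)).card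

/-- `flip(C, σ) ≥ d` : some total assignment `τ` extending `¬C` has
Hamming distance (over `V`) at least `d` from `τ ∘ σ`. -/
def flipGE (V : Finset Var) (C : Clause) (σ : Sub) (d : ℕ) : Prop :=
  ∃ τ : TAssign, extendsNeg τ C ∧ d ≤ HD V τ (comp τ σ)

/-!
Let `σ` witness that `C` is cost-SR and let `α` be an optimal model of `Γ`. If `α` satisfies `C`
it is already a model of `Γ ∪ {C}`. Otherwise `α` extends `¬C`, so `α` satisfies `Γ↾¬C`; unit
propagation is sound, hence `α` satisfies `(Γ ∪ {C})↾σ`, i.e. `α ∘ σ` satisfies `Γ ∪ {C}`, and by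
the cost condition `α ∘ σ` costs no more than `α`.
-/

theorem comp_apply_fst_eq_snd_iff (α : TAssign) (σ : Sub) (l : Lit) :
    comp α σ l.1 = l.2 ↔
      appLit σ l = .inl true ∨ ∃ m : Lit, appLit σ l = .inr m ∧ α m.1 = m.2 := by
  obtain ⟨v, b⟩ := l
  unfold comp appLit negSV
  cases hv : σ v with
  | inl c => cases b <;> cases c <;> simp
  | inr m =>
    obtain ⟨w, d⟩ := m
    cases b <;> cases d <;> simp [negLit]

theorem mem_restrictClause {σ : Sub} {C : Clause} {m : Lit} :
    m ∈ restrictClause σ C ↔ ∃ l ∈ C, appLit σ l = .inr m := by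
  simp only [restrictClause, Finset.mem_biUnion]
  refine exists_congr fun l => and_congr_right fun _ => ?_
  rcases appLit σ l with c | n <;> simp [eq_comm]

theorem mem_restrictCNF {σ : Sub} {Γ : CNF} {D : Clause} :
    D ∈ restrictCNF σ Γ ↔ ∃ E ∈ Γ, ¬ clauseTrue σ E ∧ D = restrictClause σ E := by
  simp only [restrictCNF, Multiset.mem_map, Multiset.mem_filter, and_assoc, eq_comm]

theorem satC_comp_iff (α : TAssign) (σ : Sub) (C : Clause) :
    satC (comp α σ) C ↔ clauseTrue σ C ∨ satC α (restrictClause σ C) := by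
  simp only [satC, clauseTrue, comp_apply_fst_eq_snd_iff, mem_restrictClause]
  constructor
  · rintro ⟨l, hl, h | ⟨m, hm, hαm⟩⟩
    · exact .inl ⟨l, hl, h⟩
    · exact .inr ⟨m, ⟨l, hl, hm⟩, hαm⟩
  · rintro (⟨l, hl, h⟩ | ⟨m, ⟨l, hl, hm⟩, hαm⟩)
    · exact ⟨l, hl, .inl h⟩
    · exact ⟨l, hl, .inr ⟨m, hm, hαm⟩⟩

theorem satCNF_comp_iff {α : TAssign} {σ : Sub} {Γ : CNF} :
    satCNF (comp α σ) Γ ↔ satCNF α (restrictCNF σ Γ) := by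
  constructor
  · intro h D hD
    obtain ⟨E, hE, hE_not_true, rfl⟩ := mem_restrictCNF.1 hD
    exact ((satC_comp_iff α σ E).1 (h E hE)).resolve_left hE_not_true
  · intro h E hE
    rw [satC_comp_iff]
    by_cases hE_true : clauseTrue σ E
    · exact .inl hE_true
    · exact .inr (h _ (mem_restrictCNF.2 ⟨E, hE, hE_true, rfl⟩))

theorem satCNF_cons_iff {α : TAssign} {C : Clause} {Γ : CNF} :
    satCNF α (C ::ₘ Γ) ↔ satC α C ∧ satCNF α Γ := by
  simp only [satCNF, Multiset.forall_mem_cons]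

theorem comp_litSub {α : TAssign} {l : Lit} (h : α l.1 = l.2) : comp α (litSub l) = α := by
  funext v
  unfold comp litSub
  by_cases hv : v = l.1 <;> simp [hv, ← h]

theorem comp_negSub {α : TAssign} {C : Clause} (h : extendsNeg α C) :
    comp α (negSub C) = α := by
  funext v
  unfold comp negSub
  split_ifs with h₁ h₂
  · simpa using (h _ h₁).symm
  · simpa using (h _ h₂).symm
  · simp

theorem extendsNeg_of_not_satC {α : TAssign} {C : Clause} (h : ¬ satC α C) :
    extendsNeg α C := by
  intro l hl
  by_contra hne
  exact h ⟨l, hl, by cases hα : α l.1 <;> cases hl2 : l.2 <;> simp_all⟩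

theorem satCNF_negUnits {α : TAssign} {C : Clause} (h : extendsNeg α C) :
    satCNF α (negUnits C) := by
  intro D hD
  obtain ⟨l, hl, rfl⟩ := Multiset.mem_map.1 hD
  exact ⟨negLit l, Finset.mem_singleton_self _, by simpa [negLit] using h l hl⟩

theorem UPFalse.not_satCNF {Γ : CNF} (h : UPFalse Γ) (α : TAssign) : ¬ satCNF α Γ := by
  induction h with
  | empty hmem =>
    intro hα
    obtain ⟨l, hl, -⟩ := hα _ hmem
    simp at hl
  | step l hmem _ ih =>
    intro hα
    obtain ⟨m, hm, hαm⟩ := hα _ hmem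
    rw [Finset.mem_singleton] at hm
    subst hm
    exact ih (satCNF_comp_iff.1 ((comp_litSub hαm).symm ▸ hα))

theorem UPimplies.satC {Γ : CNF} {D : Clause} (h : UPimplies Γ D) {α : TAssign}
    (hα : satCNF α Γ) : satC α D := by
  by_contra hD
  refine h.not_satCNF α fun E hE => ?_
  rcases Multiset.mem_add.1 hE with hE | hE
  · exact hα E hE
  · exact satCNF_negUnits (extendsNeg_of_not_satC hD) E hE

theorem satCNF_comp_of_UPimpliesAll {Γ Δ : CNF} {C : Clause} {σ : Sub}
    (h : UPimpliesAll (restrictCNF (negSub C) Γ) (restrictCNF σ Δ)) {α : TAssign}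
    (hα : satCNF α Γ) (hαC : extendsNeg α C) : satCNF (comp α σ) Δ :=
  satCNF_comp_iff.2 fun D hD =>
    (h D hD).satC (satCNF_comp_iff.1 ((comp_negSub hαC).symm ▸ hα))

theorem CostSRwit.exists_satCNF_cons_cost_le {B : Finset Var} {Γ : CNF} {C : Clause}
    {σ : Sub} (hσ : CostSRwit B Γ C σ) {α : TAssign} (hα : satCNF α Γ) :
    ∃ β : TAssign, satCNF β (C ::ₘ Γ) ∧ cost B β ≤ cost B α := by
  by_cases hαC : satC α C
  · exact ⟨α, satCNF_cons_iff.2 ⟨hαC, hα⟩, le_rfl⟩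
  · have hext := extendsNeg_of_not_satC hαC
    exact ⟨comp α σ, satCNF_comp_of_UPimpliesAll hσ.1 hα hext, hσ.2 α hext⟩

theorem costCNF_eq_of_forall_exists_cost_le (B : Finset Var) {Γ Δ : CNF}
    (hΔΓ : ∀ α, satCNF α Δ → satCNF α Γ)
    (hΓΔ : ∀ α, satCNF α Γ → ∃ β, satCNF β Δ ∧ cost B β ≤ cost B α) :
    costCNF B Γ = costCNF B Δ := by
  unfold costCNF
  set S := {k | ∃ α, satCNF α Γ ∧ cost B α = k}
  set T := {k | ∃ α, satCNF α Δ ∧ cost B α = k}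
  have hTS : T ⊆ S := by
    rintro _ ⟨α, hα, rfl⟩
    exact ⟨α, hΔΓ α hα, rfl⟩
  rcases S.eq_empty_or_nonempty with hS | hS
  · rw [hS, Set.subset_empty_iff.1 (hS ▸ hTS : T ⊆ ∅)]
  obtain ⟨α, hα, hα_cost⟩ := Nat.sInf_mem hS
  obtain ⟨β, hβ, hβα⟩ := hΓΔ α hα
  refine le_antisymm (Nat.sInf_le (hTS (Nat.sInf_mem ⟨_, β, hβ, rfl⟩))) ?_
  calc sInf T ≤ cost B β := Nat.sInf_le ⟨β, hβ, rfl⟩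
    _ ≤ cost B α := hβα
    _ = sInf S := hα_cost

/-- if `C` is cost-SR w.r.t. `Γ`, then `C` is redundant
w.r.t. `Γ`, i.e. `cost(Γ) = cost(Γ ∪ {C})`. -/
theorem costSR_is_redundant (B : Finset Var) (Γ : CNF) (C : Clause)
    (h : CostSR B Γ C) :
    costCNF B Γ = costCNF B (C ::ₘ Γ) := by
  obtain ⟨σ, hσ⟩ := h
  exact costCNF_eq_of_forall_exists_cost_le B (fun _ hα => (satCNF_cons_iff.1 hα).2)
    fun _ hα => hσ.exists_satCNF_cons_cost_le hα

end PaperMaxSAT
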